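/- arXiv:1604.05693 — 3 statements merged into one kernel-verified Lean document; each statement's English description precedes it below -/
import Mathlib

section
/- Assume boldface Π¹₁-determinacy. Let Q = (¹Q, ²Q) be a level ≤2 tree. Then Q is Π¹₂-wellfounded if and only if <^Q is a wellordering of rep(Q). -/
noncomputable section

/-- Brouwer–Kleene strict order on finite sequences, relative to a strict order `lt`
on entries: `s <_BK t` iff `s` properly extends `t`, or at the least position where
both are defined and they differ, the entry of `s` is smaller; `[]` is greatest. -/
def BKltBy {α : Type*} (lt : α → α → Prop) : List α → List α → Prop
  | [], _ => False
  | _ :: _, [] => True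
  | a :: s, b :: t => lt a b ∨ (a = b ∧ BKltBy lt s t)

/-- The Brouwer–Kleene order on finite sequences of natural numbers. -/
def BKlt : List ℕ → List ℕ → Prop := BKltBy (· < ·)

/-- A level-1 tree: a set of nonempty finite sequences of naturals such that whenever
`s⌢(n) ∈ P`: if `s ≠ []` then `s ∈ P`, and `s⌢(m) ∈ P` for every `m < n`. -/
def IsLevel1Tree (P : Set (List ℕ)) : Prop :=
  (∀ s ∈ P, s ≠ []) ∧
  ∀ (s : List ℕ) (n : ℕ), s ++ [n] ∈ P →
    (s ≠ [] → s ∈ P) ∧ ∀ m < n, s ++ [m] ∈ P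

/-- A level-1 tree is regular iff the sequence `(1)` is not in it. -/
def Regular1 (P : Set (List ℕ)) : Prop := ([1] : List ℕ) ∉ P

/-- `P` is Π¹₁-wellfounded: there is no infinite branch through `P`. -/
def Pi11WF (P : Set (List ℕ)) : Prop :=
  ¬ ∃ x : ℕ → ℕ, ∀ n : ℕ, 0 < n → (List.ofFn fun i : Fin n => x i) ∈ P

/-- `rep(P)`: the pair `(p, none)` codes the element `(p)` and `(p, some n)` codes
`(p, n)`. -/
def Rep1 (P : Set (List ℕ)) : Set (List ℕ × Option ℕ) := {x | x.1 ∈ P}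

def optNatLt : Option ℕ → Option ℕ → Prop
  | some n, some m => n < m
  | some _, none => True
  | _, _ => False

/-- The order `<^P` on `rep(P)`. -/
def Rep1lt (x y : List ℕ × Option ℕ) : Prop :=
  BKlt x.1 y.1 ∨ (x.1 = y.1 ∧ optNatLt x.2 y.2)

/-- The first uncountable ordinal. -/
def omega1 : Ordinal := (Cardinal.aleph 1).ord

/-- The tuple `(f p)_{p ∈ P}` respects the level-1 tree `P`: each entry is a countable
limit ordinal and `p ↦ f p` is order preserving from `(P, <_BK)` to the ordinals. -/
def Respects1 (P : Set (List ℕ)) (f : List ℕ → Ordinal) : Prop :=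
  (∀ p ∈ P, f p < omega1 ∧ Order.IsSuccLimit (f p)) ∧
  ∀ p ∈ P, ∀ q ∈ P, BKlt p q → f p < f q

/-- `σ` factors `(P, W)`: `σ(∅) = ∅` and `σ` preserves the Brouwer–Kleene order. -/
def Factors (P W : Set (List ℕ)) (σ : List ℕ → List ℕ) : Prop :=
  σ [] = [] ∧ (∀ p ∈ P, σ p ∈ insert ([] : List ℕ) W) ∧
  ∀ s ∈ insert ([] : List ℕ) P, ∀ t ∈ insert ([] : List ℕ) P,
    BKlt s t → BKlt (σ s) (σ t)

/-- Partial level ≤1 tree `(P, t)`; `t = none` codes the value `-1`. -/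
def IsPartialLevelLe1Tree (P : Set (List ℕ)) (t : Option (List ℕ)) : Prop :=
  P.Finite ∧ IsLevel1Tree P ∧ Regular1 P ∧
  (match t with
   | none => P.Nonempty
   | some s => s ∉ P ∧ IsLevel1Tree (insert s P) ∧ Regular1 (insert s P))

/-- The tuple coded by `f` on `P` together with the value `v` at `t` respects the
partial level ≤1 tree `(P, t)`. -/
def RespectsP1 (P : Set (List ℕ)) (t : Option (List ℕ)) (f : List ℕ → Ordinal)
    (v : Ordinal) : Prop :=
  match t with
  | none => Respects1 P f ∧ v < Ordinal.omega0
  | some s => Respects1 P f ∧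
      Respects1 (insert s P) (fun p => if p = s then v else f p)

/-- A level-2 tree of uniform cofinalities. -/
structure Level2Tree where
  dom : Set (List (List ℕ))
  tr : List (List ℕ) → Set (List ℕ)
  nd : List (List ℕ) → Option (List ℕ)
  nil_mem : [] ∈ dom
  take_mem : ∀ q ∈ dom, ∀ n : ℕ, q.take n ∈ dom
  lvl1 : ∀ q ∈ dom, IsLevel1Tree {a : List ℕ | q ++ [a] ∈ dom}
  tr_nil : tr [] = ∅
  nd_nil : nd [] = some [0]
  ptree : ∀ q ∈ dom, IsPartialLevelLe1Tree (tr q) (nd q)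
  compl : ∀ q ∈ dom, ∀ l : ℕ, l < q.length →
    ∃ s : List ℕ, nd (q.take l) = some s ∧ tr (q.take (l + 1)) = insert s (tr (q.take l))

/-- The node `Q_node(q)`, read as an element of `ℕ^{<ω}`. -/
def Level2Tree.ndVal (Q : Level2Tree) (q : List (List ℕ)) : List ℕ := (Q.nd q).getD []

/-- The interleaved sequence `ᾱ ⊕ q`. -/
def Level2Tree.oplus (Q : Level2Tree) (f : List ℕ → Ordinal) (q : List (List ℕ)) :
    List (Ordinal × Option (List ℕ)) :=
  (List.range q.length).map fun i => (f (Q.ndVal (q.take i)), some (q.getD i []))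

/-- The interleaved sequence `ᾱ ⊕ q⌢(-1)`, where `v` is the entry of the tuple at
the node `Q_node(q)`. -/
def Level2Tree.oplusNeg (Q : Level2Tree) (f : List ℕ → Ordinal) (v : Ordinal)
    (q : List (List ℕ)) : List (Ordinal × Option (List ℕ)) :=
  Q.oplus f q ++ [(v, none)]

def optNodeLt : Option (List ℕ) → Option (List ℕ) → Prop
  | none, some _ => True
  | some s, some t => BKlt s t
  | _, _ => False

def entryLt (x y : Ordinal × Option (List ℕ)) : Prop :=
  x.1 < y.1 ∨ (x.1 = y.1 ∧ optNodeLt x.2 y.2)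

/-- The order `<^{²Q}` on interleaved sequences. -/
def Rep2lt : List (Ordinal × Option (List ℕ)) → List (Ordinal × Option (List ℕ)) → Prop :=
  BKltBy entryLt

/-- `rep(²Q)`. -/
def Level2Tree.rep (Q : Level2Tree) : Set (List (Ordinal × Option (List ℕ))) :=
  {x | (∃ q ∈ Q.dom, ∃ f, Respects1 (Q.tr q) f ∧ x = Q.oplus f q) ∨
       (∃ q ∈ Q.dom, ∃ f v, RespectsP1 (Q.tr q) (Q.nd q) f v ∧ x = Q.oplusNeg f v q)}

/-- Π¹₂-wellfoundedness of a level-2 tree. -/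
def Level2Tree.Pi12WF (Q : Level2Tree) : Prop :=
  (∀ q ∈ Q.dom, Pi11WF {a : List ℕ | q ++ [a] ∈ Q.dom}) ∧
  ∀ y : ℕ → List ℕ, (∀ n : ℕ, (List.ofFn fun i : Fin n => y i) ∈ Q.dom) →
    ¬ Pi11WF (⋃ n : ℕ, Q.tr (List.ofFn fun i : Fin n => y i))

/-- The type of elements of `rep(Q)` for a level ≤2 tree `Q`: `inl` for the level-1
part, `inr` for the level-2 part. -/
abbrev RepLe2Elt := (List ℕ × Option ℕ) ⊕ (List (Ordinal × Option (List ℕ)))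

/-- `rep(Q)` for the level ≤2 tree `Q = (P, Q₂)`. -/
def RepLe2 (P : Set (List ℕ)) (Q : Level2Tree) : Set RepLe2Elt :=
  {x | match x with
       | Sum.inl a => a ∈ Rep1 P
       | Sum.inr b => b ∈ Q.rep}

/-- The order `<^Q` for a level ≤2 tree: the level-1 part comes first. -/
def RepLe2lt : RepLe2Elt → RepLe2Elt → Prop := Sum.Lex Rep1lt Rep2lt

/-- Π¹₂-wellfoundedness of a level ≤2 tree. -/
def Pi12WFle2 (P : Set (List ℕ)) (Q : Level2Tree) : Prop :=
  Pi11WF P ∧ Q.Pi12WF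

/-- The sequence of the first `n` values of `x`. -/
def prefixSeq {α : Type*} (x : ℕ → α) (n : ℕ) : List α := List.ofFn fun i : Fin n => x i

/-- `σ` is a winning strategy for Player I (who plays at even rounds) in the game
with payoff set `A`. -/
def WinningStratI (A : Set (ℕ → ℕ)) (σ : List ℕ → ℕ) : Prop :=
  ∀ x : ℕ → ℕ, (∀ n, x (2 * n) = σ (prefixSeq x (2 * n))) → x ∈ A

/-- `σ` is a winning strategy for Player II (who plays at odd rounds). -/
def WinningStratII (A : Set (ℕ → ℕ)) (σ : List ℕ → ℕ) : Prop :=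
  ∀ x : ℕ → ℕ, (∀ n, x (2 * n + 1) = σ (prefixSeq x (2 * n + 1))) → x ∉ A

/-- The Gale–Stewart game with payoff `A` is determined. -/
def GameDetermined (A : Set (ℕ → ℕ)) : Prop :=
  (∃ σ, WinningStratI A σ) ∨ (∃ σ, WinningStratII A σ)

/-- `A` is analytic: the projection of a closed subset of the plane of Baire space,
i.e., the projection of the set of branches of a set of pairs of finite sequences. -/
def IsAnalytic (A : Set (ℕ → ℕ)) : Prop :=
  ∃ T : Set (List ℕ × List ℕ),
    A = {x | ∃ y : ℕ → ℕ, ∀ n : ℕ, (prefixSeq x n, prefixSeq y n) ∈ T}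

/-- Boldface Π¹₁-determinacy: every game with coanalytic payoff is determined. -/
def BoldfacePi11Determinacy : Prop :=
  ∀ A : Set (ℕ → ℕ), IsAnalytic Aᶜ → GameDetermined A

/-- An infinite level-1 tower. -/
def IsInfLevel1Tower (P : ℕ → Set (List ℕ)) : Prop :=
  ∀ i : ℕ, IsLevel1Tree (P i) ∧ (P i).Finite ∧ (P i).ncard = i ∧
    ∀ j : ℕ, i < j → P i ⊆ P j

/-- `o` is a limit point of the set of ordinals `E`. -/
def IsLimitPtOf (E : Set Ordinal) (o : Ordinal) : Prop :=
  (∃ e ∈ E, e < o) ∧ ∀ b < o, ∃ e ∈ E, b < e ∧ e < o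

/-- `E` is a club in `ω₁`. -/
def IsClubInOmega1 (E : Set Ordinal) : Prop :=
  (∀ o ∈ E, o < omega1) ∧
  (∀ o < omega1, ∃ e ∈ E, o < e) ∧
  ∀ o < omega1, IsLimitPtOf E o → o ∈ E

/-- The tuple coded by `f` lies in `[E]^{P↑}`. -/
def RespectsIn (E : Set Ordinal) (P : Set (List ℕ)) (f : List ℕ → Ordinal) : Prop :=
  Respects1 P f ∧ ∀ p ∈ P, f p ∈ E ∧ IsLimitPtOf E (f p)

/-- The tuple coded by `(f, v)` lies in `[E]^{(P,t)↑}`. -/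
def RespectsPIn (E : Set Ordinal) (P : Set (List ℕ)) (t : Option (List ℕ))
    (f : List ℕ → Ordinal) (v : Ordinal) : Prop :=
  RespectsP1 P t f v ∧ (∀ p ∈ P, f p ∈ E ∧ IsLimitPtOf E (f p)) ∧
  (t ≠ none → v ∈ E)

/-- `rep(²Q) ↾ E`. -/
def Level2Tree.repRestrict (Q : Level2Tree) (E : Set Ordinal) :
    Set (List (Ordinal × Option (List ℕ))) :=
  {x | (∃ q ∈ Q.dom, ∃ f, RespectsIn E (Q.tr q) f ∧ x = Q.oplus f q) ∨
       (∃ q ∈ Q.dom, ∃ f v, RespectsPIn E (Q.tr q) (Q.nd q) f v ∧ x = Q.oplusNeg f v q)}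

/-- `rep(Q) ↾ E` for a level ≤2 tree `Q = (P, Q₂)`. -/
def RepLe2Restrict (P : Set (List ℕ)) (Q : Level2Tree) (E : Set Ordinal) :
    Set RepLe2Elt :=
  {x | match x with
       | Sum.inl a => a ∈ Rep1 P
       | Sum.inr b => b ∈ Q.repRestrict E}

/-- `C` is a closed subset of `X` in the order topology of the strict linear order
`lt` on `X`: `C` contains all of its one-sided limit points in `X`. -/
def OrderClosedIn {σ : Type*} (lt : σ → σ → Prop) (X C : Set σ) : Prop :=
  (∀ v ∈ X, (∃ w ∈ C, lt w v) →
      (∀ w ∈ X, lt w v → ∃ u ∈ C, lt w u ∧ lt u v) → v ∈ C) ∧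
  (∀ v ∈ X, (∃ w ∈ C, lt v w) →
      (∀ w ∈ X, lt v w → ∃ u ∈ C, lt v u ∧ lt u w) → v ∈ C)

end

/-!
Both directions run through the Kleene–Brouwer theorem, in the form: the Brouwer–Kleene order
on a set `D` of sequences is wellfounded as soon as the one-step extensions of each node are
wellfounded and no infinite sequence has all its finite prefixes among prefixes of elements of `D`.

For `rep(²Q)` the extensions of a node are wellfounded because ordinals are and `Q{q}` is
Π¹₁-wellfounded. An infinite branch `x` through `rep(²Q)` would determine a branch `y` through
`dom Q`, and the ordinal entries of `x` form one tuple that respects every `Q_tree(y↾n)`; a branch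
through `Q(y)`, which exists by Π¹₂-wellfoundedness, then gives a descending sequence of ordinals.

Conversely, branches yield descending sequences in `rep(Q)`: a branch through `P` directly, a
branch through `Q{q}` with any tuple respecting the finite completion of `Q(q)`, and a branch `y`
through `dom Q` with `Q(y)` Π¹₁-wellfounded with a tuple respecting `Q(y)`. Such a tuple exists
because the Brouwer–Kleene order on `Q(y)` is then a countable wellorder, which
`p ↦ ω · (rank p + 1)` embeds into the countable limit ordinals.
-/

section Auxiliary

variable {α β γ : Type*}

theorem prefixSeq_succ (x : ℕ → α) (n : ℕ) : prefixSeq x (n + 1) = prefixSeq x n ++ [x n] := by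
  rw [prefixSeq, prefixSeq, List.ofFn_succ_last]
  simp

@[simp]
theorem length_prefixSeq (x : ℕ → α) (n : ℕ) : (prefixSeq x n).length = n := by
  simp [prefixSeq]

@[simp]
theorem getElem_prefixSeq (x : ℕ → α) {n i : ℕ} (h : i < (prefixSeq x n).length) :
    (prefixSeq x n)[i] = x i := by
  simp [prefixSeq]

theorem take_prefixSeq (x : ℕ → α) {i n : ℕ} (h : i ≤ n) :
    (prefixSeq x n).take i = prefixSeq x i :=
  List.ext_getElem (by simp [h]) (by simp)

theorem map_prefixSeq (g : α → β) (x : ℕ → α) (n : ℕ) :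
    (prefixSeq x n).map g = prefixSeq (g ∘ x) n :=
  List.map_ofFn

theorem prefixSeq_ne_nil (x : ℕ → α) {n : ℕ} (hn : 0 < n) : prefixSeq x n ≠ [] := by
  simpa [← List.length_eq_zero_iff] using hn.ne'

theorem exists_forall_prefixSeq_mem_of_forall_exists_snoc {S : Set (List α)} (h₀ : [] ∈ S)
    (h : ∀ s ∈ S, ∃ a, s ++ [a] ∈ S) : ∃ x : ℕ → α, ∀ n, prefixSeq x n ∈ S := by
  choose next hnext using h
  let F : ℕ → S := fun n =>
    Nat.rec ⟨[], h₀⟩ (fun _ s => ⟨s.1 ++ [next s.1 s.2], hnext s.1 s.2⟩) n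
  let x : ℕ → α := fun n => next (F n).1 (F n).2
  refine ⟨x, fun n => ?_⟩
  suffices (F n).1 = prefixSeq x n from this ▸ (F n).2
  induction n with
  | zero => rfl
  | succ n ih =>
    change (F n).1 ++ [x n] = _
    rw [ih, prefixSeq_succ]

theorem Set.WellFoundedOn.mono_on {r r' : α → α → Prop} {s : Set α}
    (h : s.WellFoundedOn r') (hrel : ∀ a ∈ s, ∀ b ∈ s, r a b → r' a b) : s.WellFoundedOn r :=
  Subrelation.wf (fun {a b} hab => hrel a a.2 b b.2 hab) h

theorem Set.WellFoundedOn.not_forall_rel_succ {r : α → α → Prop} {s : Set α}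
    (h : s.WellFoundedOn r) {x : ℕ → α} (hx : ∀ n, x n ∈ s) : ¬ ∀ n, r (x (n + 1)) (x n) :=
  have : IsWellFounded s fun a b => r a b := ⟨h⟩
  fun hdesc =>
    let ⟨n, hn⟩ := WellFounded.not_rel_apply_succ (r := fun a b : s => r a b) fun n => ⟨x n, hx n⟩
    hn (hdesc n)

theorem Set.WellFoundedOn.prod_lex {rβ : β → β → Prop} {rγ : γ → γ → Prop}
    {s : Set β} {t : Set γ} (hs : s.WellFoundedOn rβ) (ht : t.WellFoundedOn rγ) :
    (s ×ˢ t).WellFoundedOn (Prod.Lex rβ rγ) :=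
  Set.WellFoundedOn.prod_lex_of_wellFoundedOn_fiber (f := Prod.fst) (g := Prod.snd)
    (Set.wellFoundedOn_image.mp (hs.subset (Set.fst_image_prod_subset s t))) fun _ =>
      Set.wellFoundedOn_image.mp (ht.subset fun _ ⟨_, hx, hxc⟩ => hxc ▸ hx.1.2)

theorem Set.WellFoundedOn.sum_lex {rβ : β → β → Prop} {rγ : γ → γ → Prop}
    {s : Set β} {t : Set γ} {S : Set (β ⊕ γ)} (hs : s.WellFoundedOn rβ)
    (ht : t.WellFoundedOn rγ) (hSs : ∀ a, Sum.inl a ∈ S → a ∈ s)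
    (hSt : ∀ b, Sum.inr b ∈ S → b ∈ t) : S.WellFoundedOn (Sum.Lex rβ rγ) := by
  rw [Set.wellFoundedOn_iff] at *
  refine Subrelation.wf (fun {x y} ⟨hxy, hx, hy⟩ => ?_) (Sum.lex_wf hs ht)
  cases hxy with
  | inl h => exact Sum.Lex.inl ⟨h, hSs _ hx, hSs _ hy⟩
  | inr h => exact Sum.Lex.inr ⟨h, hSt _ hx, hSt _ hy⟩
  | sep => exact Sum.Lex.sep _ _

end Auxiliary

section BrouwerKleene

variable {α : Type*} {lt : α → α → Prop}

theorem bkltBy_snoc_self (s : List α) (a : α) : BKltBy lt (s ++ [a]) s := by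
  induction s with
  | nil => trivial
  | cons b s ih => exact Or.inr ⟨rfl, ih⟩

theorem bkltBy_append_left_iff [Std.Irrefl lt] (u : List α) {s t : List α} :
    BKltBy lt (u ++ s) (u ++ t) ↔ BKltBy lt s t := by
  induction u with
  | nil => rfl
  | cons a u ih => simp only [List.cons_append, BKltBy, irrefl, true_and, false_or, ih]

instance [Std.Irrefl lt] : Std.Irrefl (BKltBy lt) where
  irrefl s := by
    induction s with
    | nil => exact id
    | cons a s ih => rintro (h | ⟨-, h⟩); exacts [irrefl a h, ih h]

instance [IsTrans α lt] : IsTrans (List α) (BKltBy lt) where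
  trans s t u := by
    induction t generalizing s u with
    | nil => exact fun _ h => h.elim
    | cons b t ih =>
      obtain _ | ⟨a, s⟩ := s
      · exact fun h => h.elim
      obtain _ | ⟨c, u⟩ := u
      · exact fun _ _ => trivial
      rintro (h₁ | ⟨rfl, h₁⟩) (h₂ | ⟨rfl, h₂⟩)
      exacts [Or.inl (_root_.trans h₁ h₂), Or.inl h₁, Or.inl h₂, Or.inr ⟨rfl, ih _ _ h₁ h₂⟩]

instance [Std.Trichotomous lt] : Std.Trichotomous (BKltBy lt) where
  trichotomous s := by
    induction s with
    | nil => rintro (_ | _) _ h <;> first | rfl | exact absurd trivial h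
    | cons a s ih =>
      rintro (_ | ⟨b, t⟩) h₁ h₂
      · exact absurd trivial h₁
      · simp only [BKltBy, not_or, not_and] at h₁ h₂
        obtain rfl := Std.Trichotomous.trichotomous a b h₁.1 h₂.1
        rw [ih t (h₁.2 rfl) (h₂.2 rfl)]

theorem bkltBy_snoc_cases [Std.Irrefl lt] {u s : List α} {a : α}
    (h : BKltBy lt u (s ++ [a])) :
    s ++ [a] <+: u ∨ (∃ b, lt b a ∧ s ++ [b] <+: u) ∨ (BKltBy lt u s ∧ ¬ s <+: u) := by
  induction s generalizing u with
  | nil =>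
    obtain _ | ⟨b, u⟩ := u
    · exact h.elim
    · rcases h with h | ⟨rfl, -⟩
      · exact Or.inr (Or.inl ⟨b, h, by simp⟩)
      · exact Or.inl (by simp)
  | cons c s ih =>
    obtain _ | ⟨d, u⟩ := u
    · exact h.elim
    · rcases h with h | ⟨rfl, h⟩
      · refine Or.inr (Or.inr ⟨Or.inl h, fun hp => ?_⟩)
        rw [List.cons_prefix_cons] at hp
        exact irrefl d (hp.1 ▸ h)
      · simp only [List.cons_append, List.cons_prefix_cons, true_and, BKltBy, irrefl,
          false_or]
        exact ih h

end BrouwerKleene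

instance : IsStrictOrder (List ℕ) BKlt where
  toIrrefl := inferInstanceAs (Std.Irrefl (BKltBy (· < ·)))
  toIsTrans := inferInstanceAs (IsTrans _ (BKltBy (· < ·)))

instance : Std.Trichotomous BKlt := inferInstanceAs (Std.Trichotomous (BKltBy (· < ·)))

instance : Std.Trichotomous optNatLt where
  trichotomous := by rintro (_ | a) (_ | b) h₁ h₂ <;> simp_all [optNatLt]; omega

instance : IsStrictOrder (Option (List ℕ)) optNodeLt where
  irrefl := by rintro (_ | a) <;> simp [optNodeLt, irrefl]
  trans := by
    rintro (_ | a) (_ | b) (_ | c) h₁ h₂ <;> simp_all [optNodeLt]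
    exact _root_.trans (r := BKlt) h₁ h₂

instance : Std.Trichotomous optNodeLt where
  trichotomous := by
    rintro (_ | a) (_ | b) h₁ h₂ <;> simp_all [optNodeLt]
    exact Std.Trichotomous.trichotomous (r := BKlt) a b h₁ h₂

theorem rep1lt_eq_prodLex : Rep1lt = Prod.Lex BKlt optNatLt := by
  ext; exact Prod.lex_def.symm

theorem entryLt_eq_prodLex : entryLt = Prod.Lex (· < ·) optNodeLt := by
  ext; exact Prod.lex_def.symm

instance : Std.Irrefl entryLt := entryLt_eq_prodLex ▸ inferInstance

instance : Std.Trichotomous RepLe2lt := by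
  unfold RepLe2lt Rep2lt
  rw [rep1lt_eq_prodLex, entryLt_eq_prodLex]
  infer_instance

section KleeneBrouwer

variable {α : Type*} {lt : α → α → Prop} [Std.Irrefl lt]

theorem acc_of_prefix_of_forall_acc {R : List α → List α → Prop}
    (hR : ∀ u v, R u v → BKltBy lt u v) {s : List α}
    (hleft : ∀ u, BKltBy lt u s → ¬ s <+: u → Acc R u)
    (hchild : ∀ a t, s ++ [a] <+: t → Acc R t) : ∀ t, s <+: t → Acc R t := by
  have hproper : ∀ t, s <+: t → t ≠ s → Acc R t := by
    rintro t ⟨_ | ⟨a, w⟩, rfl⟩ hne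
    · simp at hne
    · exact hchild a _ ⟨w, by simp⟩
  intro t ht
  by_cases hts : t = s
  · subst hts
    refine Acc.intro t fun u hu => ?_
    by_cases htu : t <+: u
    · exact hproper u htu fun h => irrefl t (h ▸ hR u t hu)
    · exact hleft u (hR u t hu) htu
  · exact hproper t ht hts

theorem wellFoundedOn_bkltBy (D : Set (List α))
    (hchild : ∀ s, {a | ∃ t ∈ D, s ++ [a] <+: t}.WellFoundedOn lt)
    (hbranch : ¬ ∃ x : ℕ → α, ∀ n, ∃ t ∈ D, prefixSeq x n <+: t) :
    D.WellFoundedOn (BKltBy lt) := by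
  rw [Set.wellFoundedOn_iff]
  set R : List α → List α → Prop := fun u v => BKltBy lt u v ∧ u ∈ D ∧ v ∈ D
  have hmem : ∀ t, ¬ Acc R t → t ∈ D := fun t ht =>
    by_contra fun h => ht (Acc.intro t fun u hu => (h hu.2.2).elim)
  -- A bad node has an inaccessible extension while everything to its left is accessible;
  -- its `lt`-least child with an inaccessible extension is bad again.
  let bad : Set (List α) :=
    {s | (∃ t, s <+: t ∧ ¬ Acc R t) ∧ ∀ u, BKltBy lt u s → ¬ s <+: u → Acc R u}
  have hstep : ∀ s ∈ bad, ∃ a, s ++ [a] ∈ bad := by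
    rintro s ⟨⟨t, hst, ht⟩, hleft⟩
    let C : Set α := {a | ∃ t, s ++ [a] <+: t ∧ ¬ Acc R t}
    have hCsub : ∀ a ∈ C, ∃ t ∈ D, s ++ [a] <+: t := fun a ⟨t, hat, ht⟩ => ⟨t, hmem t ht, hat⟩
    obtain ⟨a₀, ha₀⟩ : C.Nonempty := by
      by_contra hC
      exact ht (acc_of_prefix_of_forall_acc (fun _ _ h => h.1) hleft
        (fun a t hat => by_contra fun h => hC ⟨a, t, hat, h⟩) t hst)
    obtain ⟨⟨a, _⟩, haC, hmin⟩ :=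
      WellFounded.has_min (hchild s) {b | b.1 ∈ C} ⟨⟨a₀, hCsub a₀ ha₀⟩, ha₀⟩
    refine ⟨a, haC, fun u hu hau => ?_⟩
    rcases bkltBy_snoc_cases hu with h | ⟨b, hba, hbu⟩ | ⟨hus, hsu⟩
    · exact (hau h).elim
    · by_contra hacc
      exact hmin ⟨b, hCsub b ⟨u, hbu, hacc⟩⟩ ⟨u, hbu, hacc⟩ hba
    · exact hleft u hus hsu
  by_contra hwf
  obtain ⟨t, ht⟩ : ∃ t, ¬ Acc R t := not_forall.mp fun h => hwf ⟨h⟩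
  obtain ⟨x, hx⟩ := exists_forall_prefixSeq_mem_of_forall_exists_snoc
    (⟨⟨t, List.nil_prefix, ht⟩, fun u _ h => (h List.nil_prefix).elim⟩ : [] ∈ bad) hstep
  exact hbranch ⟨x, fun n =>
    let ⟨⟨t, hnt, hacc⟩, _⟩ := hx n
    ⟨t, hmem t hacc, hnt⟩⟩

end KleeneBrouwer

section LevelOne

theorem IsLevel1Tree.mem_of_prefix {T : Set (List ℕ)} (hT : IsLevel1Tree T) {t s : List ℕ}
    (ht : t ∈ T) (hst : s <+: t) (hs : s ≠ []) : s ∈ T := by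
  induction t using List.reverseRecOn with
  | nil => exact (hT.1 [] ht rfl).elim
  | append_singleton t n ih =>
    rcases List.prefix_concat_iff.mp hst with rfl | hst
    · exact ht
    · exact ih ((hT.2 t n ht).1 fun h => hs (List.prefix_nil.mp (h ▸ hst))) hst

theorem wellFoundedOn_bklt_of_pi11WF {D : Set (List ℕ)}
    (hD : ∀ t ∈ D, ∀ s, s <+: t → s ≠ [] → s ∈ D) (hwf : Pi11WF D) :
    D.WellFoundedOn BKlt :=
  wellFoundedOn_bkltBy D (fun _ => wellFounded_lt.wellFoundedOn) fun ⟨x, hx⟩ =>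
    hwf ⟨x, fun n hn =>
      let ⟨t, ht, hxt⟩ := hx n
      hD t ht _ hxt (prefixSeq_ne_nil x hn)⟩

theorem IsLevel1Tree.wellFoundedOn_bklt {T : Set (List ℕ)} (hT : IsLevel1Tree T)
    (hwf : Pi11WF T) : T.WellFoundedOn BKlt :=
  wellFoundedOn_bklt_of_pi11WF (fun _ ht _ => hT.mem_of_prefix ht) hwf

theorem pi11WF_of_wellFoundedOn_bklt {D : Set (List ℕ)} (hD : D.WellFoundedOn BKlt) :
    Pi11WF D := fun ⟨x, hx⟩ =>
  hD.not_forall_rel_succ (x := fun k => prefixSeq x (k + 1)) (fun k => hx _ k.succ_pos)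
    fun k => by
      rw [prefixSeq_succ x (k + 1)]
      exact bkltBy_snoc_self _ _

theorem optNatLt_wellFounded : WellFounded optNatLt :=
  Subrelation.wf (r := ((· < ·) : WithTop ℕ → WithTop ℕ → Prop))
    (fun {a b} h => by cases a <;> cases b <;> simp_all [optNatLt]) wellFounded_lt

theorem wellFoundedOn_rep1 {P : Set (List ℕ)} (hP : IsLevel1Tree P) (hwf : Pi11WF P) :
    (Rep1 P).WellFoundedOn Rep1lt := by
  rw [rep1lt_eq_prodLex]
  exact ((hP.wellFoundedOn_bklt hwf).prod_lex
    (optNatLt_wellFounded.wellFoundedOn (s := Set.univ))).subset fun _ hx => ⟨hx, trivial⟩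

end LevelOne

section Respects

theorem Respects1.mono {T T' : Set (List ℕ)} {f : List ℕ → Ordinal} (h : T ⊆ T')
    (hf : Respects1 T' f) : Respects1 T f :=
  ⟨fun p hp => hf.1 p (h hp), fun p hp q hq => hf.2 p (h hp) q (h hq)⟩

theorem RespectsP1.respects1 {P : Set (List ℕ)} {t : Option (List ℕ)} {f : List ℕ → Ordinal}
    {v : Ordinal} (h : RespectsP1 P t f v) : Respects1 P f := by
  cases t <;> exact h.1

open Ordinal in
theorem exists_respects1_of_wellFoundedOn {T : Set (List ℕ)} (hT : T.WellFoundedOn BKlt) :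
    ∃ f : List ℕ → Ordinal.{u}, Respects1 T f := by
  classical
  let r : T → T → Prop := fun a b => BKlt a b
  have : IsWellOrder T r :=
    { wf := hT
      trichotomous := fun a b h₁ h₂ =>
        Subtype.ext (Std.Trichotomous.trichotomous (r := BKlt) a.1 b.1 h₁ h₂) }
  let o : List ℕ → Ordinal.{u} := fun p => if h : p ∈ T then lift (typein r ⟨p, h⟩) else 0
  refine ⟨fun p => ω * (o p + 1), fun p hp => ⟨?_, ?_⟩, fun p hp q hq hpq => ?_⟩
  · have ho : o p < ω₁ := by
      simp only [o, dif_pos hp, Cardinal.lt_omega_iff_card_lt, Cardinal.lt_aleph_one_iff]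
      exact Cardinal.mk_le_aleph0
    rw [omega1, Cardinal.ord_aleph]
    exact isPrincipal_mul_omega 1 omega0_lt_omega_one
      (isPrincipal_add_omega 1 ho (one_lt_omega0.trans omega0_lt_omega_one))
  · show Order.IsSuccLimit (ω * (o p + 1))
    rw [mul_add_one]
    exact isSuccLimit_add _ isSuccLimit_omega0
  · have : o p < o q := by
      simpa only [o, dif_pos hp, dif_pos hq, lift_lt] using
        (typein_lt_typein r (a := ⟨p, hp⟩) (b := ⟨q, hq⟩)).mpr hpq
    simpa only [mul_lt_mul_iff_right₀ omega0_pos, ← Order.succ_eq_add_one, Order.succ_lt_succ_iff]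

end Respects

theorem wellFoundedOn_optNodeLt {C : Set (List ℕ)} (hC : C.WellFoundedOn BKlt) :
    (insert none (some '' C)).WellFoundedOn optNodeLt :=
  Set.wellFoundedOn_insert.mpr (Set.wellFoundedOn_image.mpr hC)

namespace Level2Tree

variable (Q : Level2Tree)

@[simp]
theorem length_oplus (f : List ℕ → Ordinal) (q : List (List ℕ)) :
    (Q.oplus f q).length = q.length := by
  simp [oplus]

theorem getElem_oplus (f : List ℕ → Ordinal) (q : List (List ℕ)) (i : ℕ)
    (h : i < (Q.oplus f q).length) :
    (Q.oplus f q)[i] = (f (Q.ndVal (q.take i)), some (q[i]'(by simpa using h))) := by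
  have hi : i < q.length := by simpa using h
  simp [oplus, List.getElem?_eq_getElem hi]

theorem oplus_take (f : List ℕ → Ordinal) (q : List (List ℕ)) (n : ℕ) :
    Q.oplus f (q.take n) = (Q.oplus f q).take n := by
  refine List.ext_getElem (by simp) fun i h₁ _ => ?_
  have hi : i < n := by simp at h₁; omega
  simp only [getElem_oplus, List.getElem_take, List.take_take, min_eq_left hi.le]

theorem oplus_snoc (f : List ℕ → Ordinal) (q : List (List ℕ)) (a : List ℕ) :
    Q.oplus f (q ++ [a]) = Q.oplus f q ++ [(f (Q.ndVal q), some a)] := by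
  refine List.ext_getElem (by simp) fun i h₁ _ => ?_
  rw [getElem_oplus]
  rcases (show i < q.length ∨ i = q.length by simp at h₁; omega) with hi | rfl
  · rw [List.getElem_append_left (as := Q.oplus f q) (by simpa using hi), getElem_oplus]
    simp [List.take_append_of_le_length hi.le, List.getElem_append_left hi]
  · simp

theorem map_oplus (f : List ℕ → Ordinal) (q : List (List ℕ)) :
    (Q.oplus f q).map (fun e => e.2.getD []) = q :=
  List.ext_getElem (by simp) fun _ _ _ => by simp [getElem_oplus]

theorem tr_take_succ {q : List (List ℕ)} (hq : q ∈ Q.dom) {i : ℕ} (hi : i < q.length) :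
    Q.tr (q.take (i + 1)) = insert (Q.ndVal (q.take i)) (Q.tr (q.take i)) := by
  obtain ⟨s, hs, htr⟩ := Q.compl q hq i hi
  rw [htr, ndVal, hs, Option.getD_some]

theorem tr_snoc {q : List (List ℕ)} {a : List ℕ} (h : q ++ [a] ∈ Q.dom) :
    Q.tr (q ++ [a]) = insert (Q.ndVal q) (Q.tr q) := by
  have := Q.tr_take_succ h (i := q.length) (by simp)
  rwa [List.take_of_length_le (by simp), List.take_left] at this

theorem tr_eq_image {q : List (List ℕ)} (hq : q ∈ Q.dom) :
    Q.tr q = (fun i => Q.ndVal (q.take i)) '' Set.Iio q.length := by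
  suffices ∀ n ≤ q.length, Q.tr (q.take n) = (fun i => Q.ndVal (q.take i)) '' Set.Iio n by
    simpa using this q.length le_rfl
  intro n hn
  induction n with
  | zero => simp [tr_nil]
  | succ n ih =>
    rw [Q.tr_take_succ hq (by omega), ih (by omega), ← Order.succ_eq_add_one,
      Order.Iio_succ_eq_insert, Set.image_insert_eq]

theorem ndVal_take_mem_tr {q : List (List ℕ)} (hq : q ∈ Q.dom) {i : ℕ} (hi : i < q.length) :
    Q.ndVal (q.take i) ∈ Q.tr q := by
  rw [Q.tr_eq_image hq]
  exact ⟨i, hi, rfl⟩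

theorem tr_take_subset {q : List (List ℕ)} (hq : q ∈ Q.dom) (n : ℕ) :
    Q.tr (q.take n) ⊆ Q.tr q := by
  rw [Q.tr_eq_image (Q.take_mem q hq n)]
  rintro _ ⟨i, hi, rfl⟩
  simp only [Set.mem_Iio, List.length_take, lt_min_iff] at hi
  simpa [List.take_take, hi.1.le] using Q.ndVal_take_mem_tr hq hi.2

theorem exists_oplus_of_snoc_prefix {X : List (Ordinal × Option (List ℕ))} (hX : X ∈ Q.rep)
    {s : List (Ordinal × Option (List ℕ))} {e : Ordinal × Option (List ℕ)}
    (h : s ++ [e] <+: X) :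
    ∃ q ∈ Q.dom, ∃ f, Respects1 (Q.tr q) f ∧ s = Q.oplus f q ∧
      ∀ a, e.2 = some a → q ++ [a] ∈ Q.dom := by
  obtain ⟨q, hq, f, hf, v, hXq⟩ : ∃ q ∈ Q.dom, ∃ f, Respects1 (Q.tr q) f ∧
      ∃ v, X <+: Q.oplus f q ++ [(v, none)] := by
    rcases hX with ⟨q, hq, f, hf, rfl⟩ | ⟨q, hq, f, v, hf, rfl⟩
    · exact ⟨q, hq, f, hf, 0, List.prefix_append _ _⟩
    · exact ⟨q, hq, f, hf.respects1, v, List.prefix_rfl⟩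
  rcases List.prefix_concat_iff.mp (h.trans hXq) with h | h
  · obtain ⟨rfl, he⟩ := List.append_inj' h rfl
    obtain rfl := List.singleton_inj.mp he
    exact ⟨q, hq, f, hf, rfl, fun a ha => nomatch ha⟩
  · have hn : s.length < q.length := by simpa using h.length_le
    rw [List.prefix_iff_eq_take, ← oplus_take, List.length_append, List.length_singleton,
      List.take_succ_eq_append_getElem hn, oplus_snoc] at h
    obtain ⟨hs, he⟩ := List.append_inj' h rfl
    obtain rfl := List.singleton_inj.mp he
    refine ⟨q.take s.length, Q.take_mem q hq _, f, hf.mono (Q.tr_take_subset hq _), hs, ?_⟩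
    rintro a ⟨⟩
    rw [← List.take_succ_eq_append_getElem hn]
    exact Q.take_mem q hq _

theorem wellFoundedOn_children (hQ : ∀ q ∈ Q.dom, Pi11WF {a | q ++ [a] ∈ Q.dom})
    (s : List (Ordinal × Option (List ℕ))) :
    {e | ∃ X ∈ Q.rep, s ++ [e] <+: X}.WellFoundedOn entryLt := by
  set r := s.map fun e => e.2.getD []
  have hC : {a | r ++ [a] ∈ Q.dom}.WellFoundedOn BKlt := by
    by_cases hr : r ∈ Q.dom
    · exact (Q.lvl1 r hr).wellFoundedOn_bklt (hQ r hr)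
    · refine (Set.wellFoundedOn_empty _).subset fun a ha => hr ?_
      simpa using Q.take_mem _ ha r.length
  rw [entryLt_eq_prodLex]
  refine ((wellFounded_lt.wellFoundedOn (s := Set.univ)).prod_lex
    (wellFoundedOn_optNodeLt hC)).subset ?_
  rintro ⟨o, _ | a⟩ ⟨X, hX, hsX⟩
  · exact ⟨trivial, Set.mem_insert _ _⟩
  · obtain ⟨q, -, f, -, rfl, ha⟩ := Q.exists_oplus_of_snoc_prefix hX hsX
    exact ⟨trivial, Or.inr ⟨a, by simpa [r, map_oplus] using ha a rfl, rfl⟩⟩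

theorem exists_respects1_of_prefixSeq_succ_prefix {x : ℕ → Ordinal × Option (List ℕ)} {n : ℕ}
    (h : ∃ X ∈ Q.rep, prefixSeq x (n + 1) <+: X) :
    prefixSeq (fun i => (x i).2.getD []) n ∈ Q.dom ∧
      ∃ f, Respects1 (Q.tr (prefixSeq (fun i => (x i).2.getD []) n)) f ∧
        prefixSeq x n = Q.oplus f (prefixSeq (fun i => (x i).2.getD []) n) := by
  obtain ⟨X, hX, hxX⟩ := h
  rw [prefixSeq_succ] at hxX
  obtain ⟨q, hq, f, hf, hxq, -⟩ := Q.exists_oplus_of_snoc_prefix hX hxX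
  obtain rfl : q = prefixSeq (fun i => (x i).2.getD []) n := by
    rw [← Q.map_oplus f q, ← hxq, map_prefixSeq]
    rfl
  exact ⟨hq, f, hf, hxq⟩

theorem fst_lt_of_bklt_ndVal {x : ℕ → Ordinal × Option (List ℕ)} {y : ℕ → List ℕ}
    (hxy : ∀ n, prefixSeq y n ∈ Q.dom ∧
      ∃ f, Respects1 (Q.tr (prefixSeq y n)) f ∧ prefixSeq x n = Q.oplus f (prefixSeq y n))
    {i j : ℕ} (hij : BKlt (Q.ndVal (prefixSeq y i)) (Q.ndVal (prefixSeq y j))) :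
    (x i).1 < (x j).1 := by
  obtain ⟨hy, f, hf, hxf⟩ := hxy (max i j + 1)
  have hval : ∀ k < max i j + 1, (x k).1 = f (Q.ndVal (prefixSeq y k)) ∧
      Q.ndVal (prefixSeq y k) ∈ Q.tr (prefixSeq y (max i j + 1)) := by
    intro k hk
    have hxk := List.getElem_of_eq hxf (i := k) (by simpa using hk)
    rw [getElem_prefixSeq, getElem_oplus] at hxk
    rw [← take_prefixSeq y hk.le]
    exact ⟨congrArg Prod.fst hxk, Q.ndVal_take_mem_tr hy (by simpa using hk)⟩
  rw [(hval i (by omega)).1, (hval j (by omega)).1]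
  exact hf.2 _ (hval i (by omega)).2 _ (hval j (by omega)).2 hij

theorem not_exists_branch_rep
    (hQ : ∀ y : ℕ → List ℕ, (∀ n, prefixSeq y n ∈ Q.dom) →
      ¬ Pi11WF (⋃ n : ℕ, Q.tr (prefixSeq y n))) :
    ¬ ∃ x : ℕ → Ordinal × Option (List ℕ), ∀ n, ∃ X ∈ Q.rep, prefixSeq x n <+: X := by
  rintro ⟨x, hx⟩
  have hxy := fun n => Q.exists_respects1_of_prefixSeq_succ_prefix (hx (n + 1))
  obtain ⟨b, hb⟩ := not_not.mp (hQ _ fun n => (hxy n).1)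
  have hbnode : ∀ m, ∃ i,
      prefixSeq b (m + 1) = Q.ndVal (prefixSeq (fun i => (x i).2.getD []) i) := by
    intro m
    obtain ⟨_, ⟨n, rfl⟩, hbn⟩ := hb (m + 1) m.succ_pos
    change prefixSeq b (m + 1) ∈ Q.tr (prefixSeq _ n) at hbn
    rw [Q.tr_eq_image (hxy n).1] at hbn
    obtain ⟨i, hi, hbi⟩ := hbn
    rw [length_prefixSeq, Set.mem_Iio] at hi
    beta_reduce at hbi
    exact ⟨i, by rw [← hbi, take_prefixSeq _ hi.le]⟩
  choose I hI using hbnode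
  refine not_strictAnti_of_wellFoundedLT (fun m => (x (I m)).1)
    (strictAnti_nat_of_succ_lt fun m => Q.fst_lt_of_bklt_ndVal hxy ?_)
  rw [← hI, ← hI, prefixSeq_succ b (m + 1)]
  exact bkltBy_snoc_self _ _

theorem wellFoundedOn_rep (hQ : Q.Pi12WF) : Q.rep.WellFoundedOn Rep2lt :=
  wellFoundedOn_bkltBy Q.rep (Q.wellFoundedOn_children hQ.1) (Q.not_exists_branch_rep hQ.2)

theorem pi11WF_children (h : Q.rep.WellFoundedOn Rep2lt) (q : List (List ℕ)) :
    Pi11WF {a | q ++ [a] ∈ Q.dom} := by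
  refine pi11WF_of_wellFoundedOn_bklt ?_
  rcases Set.eq_empty_or_nonempty {a | q ++ [a] ∈ Q.dom} with hC | ⟨a₀, ha₀⟩
  · exact hC ▸ Set.wellFoundedOn_empty _
  obtain ⟨f, hf⟩ :=
    exists_respects1_of_wellFoundedOn ((Q.ptree _ ha₀).1.wellFoundedOn (r := BKlt))
  refine (h.mapsTo (fun a => Q.oplus f (q ++ [a])) fun a ha => ?_).mono_on
    fun a _ b _ hab => ?_
  · exact Or.inl ⟨_, ha, f, by rwa [Q.tr_snoc ha, ← Q.tr_snoc ha₀], rfl⟩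
  · show BKltBy entryLt (Q.oplus f (q ++ [a])) (Q.oplus f (q ++ [b]))
    rw [Q.oplus_snoc, Q.oplus_snoc, bkltBy_append_left_iff]
    exact Or.inl (Or.inr ⟨rfl, hab⟩)

theorem not_pi11WF_branch (h : Q.rep.WellFoundedOn Rep2lt) (y : ℕ → List ℕ)
    (hy : ∀ n, prefixSeq y n ∈ Q.dom) : ¬ Pi11WF (⋃ n : ℕ, Q.tr (prefixSeq y n)) := by
  intro hU
  have hprefix : ∀ t ∈ ⋃ n : ℕ, Q.tr (prefixSeq y n), ∀ s, s <+: t → s ≠ [] →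
      s ∈ ⋃ n : ℕ, Q.tr (prefixSeq y n) := by
    intro t ht s hst hs
    obtain ⟨n, htn⟩ := Set.mem_iUnion.mp ht
    exact Set.mem_iUnion.mpr ⟨n, (Q.ptree _ (hy n)).2.1.mem_of_prefix htn hst hs⟩
  obtain ⟨f, hf⟩ := exists_respects1_of_wellFoundedOn (wellFoundedOn_bklt_of_pi11WF hprefix hU)
  refine h.not_forall_rel_succ (x := fun n => Q.oplus f (prefixSeq y n))
    (fun n => Or.inl ⟨_, hy n, f, hf.mono (Set.subset_iUnion_of_subset n subset_rfl), rfl⟩)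
    fun n => ?_
  simp only [prefixSeq_succ, Q.oplus_snoc]
  exact bkltBy_snoc_self _ _

end Level2Tree

theorem isWellOrder_repLe2 {P : Set (List ℕ)} (hP : IsLevel1Tree P) {Q : Level2Tree}
    (h : Pi12WFle2 P Q) : IsWellOrder {x // x ∈ RepLe2 P Q} (fun a b => RepLe2lt a.1 b.1) where
  wf := (wellFoundedOn_rep1 hP h.1).sum_lex (Q.wellFoundedOn_rep h.2) (fun _ ha => ha)
    fun _ hb => hb
  trichotomous a b h₁ h₂ :=
    Subtype.ext (Std.Trichotomous.trichotomous (r := RepLe2lt) a.1 b.1 h₁ h₂)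

theorem pi12WFle2_of_wellFoundedOn {P : Set (List ℕ)} {Q : Level2Tree}
    (h : (RepLe2 P Q).WellFoundedOn RepLe2lt) : Pi12WFle2 P Q := by
  have h₁ : P.WellFoundedOn BKlt :=
    (h.mapsTo (fun p => Sum.inl (p, none)) fun _ hp => hp).mono_on
      fun _ _ _ _ hpq => Sum.Lex.inl (Or.inl hpq)
  have h₂ : Q.rep.WellFoundedOn Rep2lt :=
    (h.mapsTo Sum.inr fun _ hX => hX).mono_on fun _ _ _ _ hXY => Sum.Lex.inr hXY
  exact ⟨pi11WF_of_wellFoundedOn_bklt h₁, fun q _ => Q.pi11WF_children h₂ q,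
    Q.not_pi11WF_branch h₂⟩

theorem stmt0_general
    (P : Set (List ℕ)) (hP : IsLevel1Tree P) (Q : Level2Tree) :
    Pi12WFle2 P Q ↔
      IsWellOrder {x // x ∈ RepLe2 P Q} (fun a b => RepLe2lt a.1 b.1) :=
  ⟨isWellOrder_repLe2 hP, fun h => pi12WFle2_of_wellFoundedOn h.wf⟩

/-- Assume boldface Π¹₁-determinacy. Let `Q = (P, Q₂)` be a level ≤2
tree. Then `Q` is Π¹₂-wellfounded iff `<^Q` is a wellordering of `rep(Q)`. -/
theorem stmt0 (hdet : BoldfacePi11Determinacy)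
    (P : Set (List ℕ)) (hP : IsLevel1Tree P) (Q : Level2Tree) :
    Pi12WFle2 P Q ↔
      IsWellOrder {x // x ∈ RepLe2 P Q} (fun a b => RepLe2lt a.1 b.1) :=
  stmt0_general P hP Q
end

section
/- For every countable linear order L there exists a level-1 tree P such that L is order-isomorphic to (P, <_BK), the Brouwer–Kleene order restricted to P. -/
/-!
Enumerate `L` and place its elements one at a time as nodes of a growing finite level-1 tree.
A new element `x` becomes a new last child `b ⌢ (k)` of the node `b` of the least element placed
so far above `x` (of the root if there is none). In the Brouwer–Kleene order this child lies below
`b`, and above every node below `b`: a node below `b` either branches off to the left of `b` or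
runs through an older child `b ⌢ (j)`, `j < k`. So each finite stage is represented
order-isomorphically, and the union of the stages is the required tree.
-/

namespace BKltBy

variable {α : Type*} {r : α → α → Prop}

@[simp] theorem not_nil_left (t : List α) : ¬ BKltBy r [] t := by
  simp [BKltBy]

theorem cons_cons_iff {a b : α} {s t : List α} :
    BKltBy r (a :: s) (b :: t) ↔ r a b ∨ a = b ∧ BKltBy r s t := Iff.rfl

theorem nil_right_of_ne_nil : ∀ {s : List α}, s ≠ [] → BKltBy r s []
  | _ :: _, _ => trivial

theorem irrefl [Std.Irrefl r] : ∀ s : List α, ¬ BKltBy r s s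
  | [] => not_nil_left []
  | a :: s => by
    rw [cons_cons_iff]
    rintro (h | ⟨-, h⟩)
    exacts [Std.Irrefl.irrefl a h, irrefl s h]

theorem trans [IsTrans α r] : ∀ {s t u : List α}, BKltBy r s t → BKltBy r t u → BKltBy r s u
  | [], _, _, h, _ => absurd h (not_nil_left _)
  | _ :: _, [], _, _, h => absurd h (not_nil_left _)
  | _ :: _, _ :: _, [], _, _ => trivial
  | _ :: _, _ :: _, _ :: _, h, h' => by
    rw [cons_cons_iff] at *
    rcases h with h | ⟨rfl, h⟩ <;> rcases h' with h' | ⟨rfl, h'⟩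
    · exact .inl (_root_.trans h h')
    · exact .inl h
    · exact .inl h'
    · exact .inr ⟨rfl, trans h h'⟩

theorem trichotomous [Std.Trichotomous r] :
    ∀ s t : List α, BKltBy r s t ∨ s = t ∨ BKltBy r t s
  | [], [] => .inr (.inl rfl)
  | [], _ :: _ => .inr (.inr trivial)
  | _ :: _, [] => .inl trivial
  | a :: s, b :: t => by
    simp only [cons_cons_iff, List.cons.injEq]
    rcases trichotomous_of r a b with h | rfl | h
    · exact .inl (.inl h)
    · rcases trichotomous s t with h | h | h <;> simp [h]
    · exact .inr (.inr (.inl h))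

instance [IsStrictTotalOrder α r] : IsStrictTotalOrder (List α) (BKltBy r) where
  irrefl := irrefl
  trans _ _ _ := trans
  trichotomous s t := by
    rcases trichotomous (r := r) s t with h | h | h <;> simp_all

theorem append_cons_lt :
    ∀ {b : List α}, b ≠ [] → ∀ (x : α) (l : List α), BKltBy r (b ++ x :: l) b
  | [_], _, _, _ => .inr ⟨rfl, trivial⟩
  | _ :: c :: b, _, x, l => .inr ⟨rfl, append_cons_lt (List.cons_ne_nil c b) x l⟩

theorem lt_append_singleton :
    ∀ {a b : List α} {k : α}, BKltBy r a b → (∀ j rest, a = b ++ j :: rest → r j k) →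
      BKltBy r a (b ++ [k])
  | [], _, _, h, _ => absurd h (not_nil_left _)
  | x :: s, [], _, _, hk => .inl (hk x s rfl)
  | x :: s, c :: b, _, h, hk => by
    rcases h with h | ⟨rfl, h⟩
    · exact .inl h
    · exact .inr ⟨rfl, lt_append_singleton h fun j rest hj => hk j rest (by simp [hj])⟩

end BKltBy

instance : IsStrictTotalOrder (List ℕ) BKlt := inferInstanceAs (IsStrictTotalOrder _ (BKltBy _))

namespace IsLevel1Tree

variable {S : Set (List ℕ)}

theorem mem_of_append_mem (hS : IsLevel1Tree S) {t : List ℕ} (ht : t ≠ []) :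
    ∀ {u : List ℕ}, t ++ u ∈ S → t ∈ S := by
  intro u
  induction u using List.reverseRecOn with
  | nil => simp
  | append_singleton u m ih =>
    intro h
    rw [← List.append_assoc] at h
    exact ih ((hS.2 _ m h).1 (by simp [ht]))

theorem iUnion {ι : Sort*} {P : ι → Set (List ℕ)} (hP : ∀ i, IsLevel1Tree (P i)) :
    IsLevel1Tree (⋃ i, P i) := by
  refine ⟨fun s hs => ?_, fun s n hs => ?_⟩
  · obtain ⟨i, hi⟩ := Set.mem_iUnion.1 hs
    exact (hP i).1 s hi
  · obtain ⟨i, hi⟩ := Set.mem_iUnion.1 hs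
    obtain ⟨h₁, h₂⟩ := (hP i).2 s n hi
    exact ⟨fun h => Set.mem_iUnion.2 ⟨i, h₁ h⟩,
      fun m hm => Set.mem_iUnion.2 ⟨i, h₂ m hm⟩⟩

theorem insert_append_singleton (hS : IsLevel1Tree S) {b : List ℕ} {k : ℕ}
    (hb : b ≠ [] → b ∈ S) (hk : ∀ j < k, b ++ [j] ∈ S) :
    IsLevel1Tree (insert (b ++ [k]) S) := by
  refine ⟨?_, fun s n hsn => ?_⟩
  · rintro s (rfl | hs)
    exacts [by simp, hS.1 s hs]
  · rcases hsn with heq | hmem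
    · obtain ⟨rfl, rfl⟩ := List.append_singleton_inj.1 heq
      exact ⟨fun h => .inr (hb h), fun m hm => .inr (hk m hm)⟩
    · obtain ⟨h₁, h₂⟩ := hS.2 s n hmem
      exact ⟨fun h => .inr (h₁ h), fun m hm => .inr (h₂ m hm)⟩

theorem exists_insert_child (hS : IsLevel1Tree S) (hfin : S.Finite) {b : List ℕ}
    (hb : b ≠ [] → b ∈ S) :
    ∃ k, IsLevel1Tree (insert (b ++ [k]) S) ∧ ∀ a ∈ S, BKlt a b → BKlt a (b ++ [k]) := by
  classical
  have hfresh : ∃ k, b ++ [k] ∉ S := by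
    obtain ⟨k, hk⟩ := Infinite.exists_notMem_finset
      (hfin.preimage (fun _ _ _ _ h => by simpa using h) : {k | b ++ [k] ∈ S}.Finite).toFinset
    exact ⟨k, by simpa using hk⟩
  set k := Nat.find hfresh
  have hchild : ∀ j, b ++ [j] ∈ S → j < k := by
    intro j hj
    by_contra! hkj
    rcases hkj.lt_or_eq with hkj | rfl
    exacts [Nat.find_spec hfresh ((hS.2 b j hj).2 k hkj), Nat.find_spec hfresh hj]
  refine ⟨k, hS.insert_append_singleton hb fun j hj => not_not.1 (Nat.find_min hfresh hj),
    fun a ha hab => BKltBy.lt_append_singleton hab fun j rest hj => hchild j ?_⟩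
  subst hj
  exact hS.mem_of_append_mem (by simp) (by simpa using ha)

end IsLevel1Tree

section TreeEmbedding

variable {L : Type*} [LinearOrder L]

def IsTreeEmbeddingOn (D : Finset L) (f : L → List ℕ) : Prop :=
  (∀ x ∈ D, ∀ y ∈ D, x < y → BKlt (f x) (f y)) ∧ IsLevel1Tree (f '' D)

namespace IsTreeEmbeddingOn

variable {D : Finset L} {f : L → List ℕ}

theorem empty (f : L → List ℕ) : IsTreeEmbeddingOn ∅ f :=
  ⟨by simp, by simp [IsLevel1Tree]⟩

theorem congr (h : IsTreeEmbeddingOn D f) {g : L → List ℕ} (hfg : Set.EqOn f g D) :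
    IsTreeEmbeddingOn D g :=
  ⟨fun x hx y hy hxy => hfg hx ▸ hfg hy ▸ h.1 x hx y hy hxy, hfg.image_eq ▸ h.2⟩

theorem ne_nil (h : IsTreeEmbeddingOn D f) {y : L} (hy : y ∈ D) : f y ≠ [] :=
  h.2.1 _ ⟨y, hy, rfl⟩

/-- `b` is the image of the least element of `D` above `x`, or the root `[]` if there is none. -/
theorem exists_cut_node (h : IsTreeEmbeddingOn D f) (x : L) :
    ∃ b : List ℕ, (b ≠ [] → b ∈ f '' D) ∧ (∀ y ∈ D, y < x → BKlt (f y) b) ∧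
      ∀ y ∈ D, x < y → b ≠ [] ∧ (b = f y ∨ BKlt b (f y)) := by
  by_cases hU : (D.filter (x < ·)).Nonempty
  · set m := (D.filter (x < ·)).min' hU
    obtain ⟨hmD, hxm⟩ := Finset.mem_filter.1 ((D.filter (x < ·)).min'_mem hU)
    refine ⟨f m, fun _ => ⟨m, hmD, rfl⟩, fun y hy hyx => h.1 y hy m hmD (hyx.trans hxm),
      fun y hy hxy => ⟨h.ne_nil hmD, ?_⟩⟩
    rcases ((D.filter (x < ·)).min'_le y (Finset.mem_filter.2 ⟨hy, hxy⟩)).lt_or_eq with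
      hmy | hmy
    exacts [.inr (h.1 m hmD y hy hmy), .inl (congrArg f hmy)]
  · refine ⟨[], fun h => absurd rfl h, fun y hy _ => BKltBy.nil_right_of_ne_nil (h.ne_nil hy),
      fun y hy hxy => absurd ⟨y, Finset.mem_filter.2 ⟨hy, hxy⟩⟩ hU⟩

theorem exists_extend (h : IsTreeEmbeddingOn D f) {x : L} (hx : x ∉ D) :
    ∃ f', IsTreeEmbeddingOn (insert x D) f' ∧ Set.EqOn f' f D := by
  obtain ⟨b, hbS, hbelow, habove⟩ := h.exists_cut_node x
  obtain ⟨k, htree, hk⟩ := h.2.exists_insert_child (D.finite_toSet.image f) hbS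
  have hx_lt : ∀ y ∈ D, x < y → BKlt (b ++ [k]) (f y) := by
    intro y hy hxy
    obtain ⟨hb, hby⟩ := habove y hy hxy
    have hkb : BKlt (b ++ [k]) b := BKltBy.append_cons_lt hb k []
    rcases hby with hby | hby
    exacts [hby ▸ hkb, BKltBy.trans hkb hby]
  have hlt_x : ∀ y ∈ D, y < x → BKlt (f y) (b ++ [k]) :=
    fun y hy hyx => hk _ ⟨y, hy, rfl⟩ (hbelow y hy hyx)
  set f' := Function.update f x (b ++ [k])
  have heq : Set.EqOn f' f D := fun y hy => Function.update_of_ne (ne_of_mem_of_not_mem hy hx) _ _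
  refine ⟨f', ⟨?_, ?_⟩, heq⟩
  · simp only [Finset.mem_insert]
    rintro y (rfl | hy) z (rfl | hz) hyz
    · exact absurd hyz (lt_irrefl _)
    · simpa [f', heq hz] using hx_lt z hz hyz
    · simpa [f', heq hy] using hlt_x y hy hyz
    · simpa [heq hy, heq hz] using h.1 y hy z hz hyz
  · rw [Finset.coe_insert, Set.image_insert_eq, heq.image_eq]
    simpa [f'] using htree

end IsTreeEmbeddingOn

end TreeEmbedding

section FiniteApproximation

variable {L β : Type*} [DecidableEq L] (Good : Finset L → (L → β) → Prop)

theorem exists_chain_of_forall_extend [Countable L] {f₀ : L → β} (h₀ : Good ∅ f₀)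
    (extend : ∀ D f x, Good D f → x ∉ D →
      ∃ f', Good (insert x D) f' ∧ Set.EqOn f' f D) :
    ∃ (D : ℕ → Finset L) (f : ℕ → L → β), (∀ n, Good (D n) (f n)) ∧
      (∀ n, D n ⊆ D (n + 1) ∧ Set.EqOn (f (n + 1)) (f n) (D n)) ∧
      ∀ x, ∃ n, x ∈ D n := by
  have step (p : Finset L × (L → β)) (x : L) :
      ∃ f', Good p.1 p.2 → Good (insert x p.1) f' ∧ Set.EqOn f' p.2 p.1 := by
    by_cases hx : x ∈ p.1
    · exact ⟨p.2, fun h => ⟨by rwa [Finset.insert_eq_of_mem hx], Set.eqOn_refl _ _⟩⟩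
    by_cases hp : Good p.1 p.2
    · obtain ⟨f', hf'⟩ := extend p.1 p.2 x hp hx
      exact ⟨f', fun _ => hf'⟩
    · exact ⟨p.2, fun h => absurd h hp⟩
  choose next hnext using step
  obtain ⟨g, hg⟩ := exists_surjective_nat (Option L)
  let seq (n : ℕ) : Finset L × (L → β) :=
    Nat.rec (∅, f₀) (fun n p => (g n).elim p fun x => (insert x p.1, next p x)) n
  have hseq_succ (n : ℕ) : seq (n + 1) =
      (g n).elim (seq n) fun x => (insert x (seq n).1, next (seq n) x) := rfl
  have hsucc (n : ℕ) : Good (seq n).1 (seq n).2 → Good (seq (n + 1)).1 (seq (n + 1)).2 ∧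
      (seq n).1 ⊆ (seq (n + 1)).1 ∧ Set.EqOn (seq (n + 1)).2 (seq n).2 (seq n).1 := by
    intro h
    rw [hseq_succ]
    cases g n with
    | none => exact ⟨h, subset_rfl, Set.eqOn_refl _ _⟩
    | some x => exact ⟨(hnext _ x h).1, Finset.subset_insert _ _, (hnext _ x h).2⟩
  have hgood (n : ℕ) : Good (seq n).1 (seq n).2 := by
    induction n with
    | zero => exact h₀
    | succ n ih => exact (hsucc n ih).1
  refine ⟨fun n => (seq n).1, fun n => (seq n).2, hgood, fun n => (hsucc n (hgood n)).2,
    fun x => ?_⟩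
  obtain ⟨n, hn⟩ := hg (some x)
  refine ⟨n + 1, ?_⟩
  simp only [hseq_succ, hn]
  exact Finset.mem_insert_self x _

theorem exists_eqOn_forall_finset [Countable L] {f₀ : L → β} (h₀ : Good ∅ f₀)
    (extend : ∀ D f x, Good D f → x ∉ D →
      ∃ f', Good (insert x D) f' ∧ Set.EqOn f' f D) :
    ∃ F : L → β, ∀ D : Finset L, ∃ D' f, D ⊆ D' ∧ Good D' f ∧ Set.EqOn f F D' := by
  obtain ⟨D, f, hgood, hsucc, hexh⟩ := exists_chain_of_forall_extend Good h₀ extend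
  have hmono : Monotone D := monotone_nat_of_le_succ fun n => (hsucc n).1
  have hagree {m n : ℕ} (hmn : m ≤ n) : Set.EqOn (f n) (f m) (D m) := by
    induction n, hmn using Nat.le_induction with
    | base => exact Set.eqOn_refl _ _
    | succ n hmn ih => exact ((hsucc n).2.mono (hmono hmn)).trans ih
  choose idx hidx using hexh
  refine ⟨fun x => f (idx x) x, fun A => ⟨D (A.sup idx), f (A.sup idx), fun x hx => ?_,
    hgood _, fun y hy => ?_⟩⟩
  · exact hmono (Finset.le_sup hx) (hidx x)
  · rcases le_total (A.sup idx) (idx y) with h | h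
    exacts [(hagree h hy).symm, hagree h (hidx y)]

end FiniteApproximation

/-- Every countable linear order is order-isomorphic to `(P, <_BK)`
for some level-1 tree `P`. -/
theorem stmt3 (L : Type) [LinearOrder L] [Countable L] :
    ∃ P : Set (List ℕ), IsLevel1Tree P ∧
      Nonempty ((fun a b : L => a < b) ≃r fun s t : {s // s ∈ P} => BKlt s.1 t.1) := by
  obtain ⟨F, hF⟩ := exists_eqOn_forall_finset (IsTreeEmbeddingOn (L := L))
    (IsTreeEmbeddingOn.empty fun _ => []) fun _ _ _ h hx => h.exists_extend hx
  replace hF (D : Finset L) : ∃ D', D ⊆ D' ∧ IsTreeEmbeddingOn D' F :=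
    let ⟨D', _, hD, hf, hfF⟩ := hF D
    ⟨D', hD, hf.congr hfF⟩
  have hlt (x y : L) (hxy : x < y) : BKlt (F x) (F y) := by
    obtain ⟨D, hD, h⟩ := hF {x, y}
    exact h.1 x (hD (by simp)) y (hD (by simp)) hxy
  have htree : IsLevel1Tree (Set.range F) := by
    choose D hD h using fun x => hF {x}
    convert IsLevel1Tree.iUnion fun x => (h x).2
    refine subset_antisymm (Set.range_subset_iff.2 fun x => ?_) ?_
    · exact Set.mem_iUnion.2 ⟨x, x, hD x (Finset.mem_singleton_self x), rfl⟩
    · exact Set.iUnion_subset fun x => Set.image_subset_range _ _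
  refine ⟨_, htree, ⟨.ofSurjective ((RelEmbedding.ofMonotone F hlt).codRestrict _
    Set.mem_range_self) ?_⟩⟩
  rintro ⟨_, x, rfl⟩
  exact ⟨x, rfl⟩
end

section
/- Let P and W be Π¹₁-wellfounded level-1 trees. Then the order type of (rep(P), <^P) is less than or equal to the order type of (rep(W), <^W) if and only if there exists a map σ that factors (P, W). -/
/-!
An order embedding `e : rep(P) ↪ rep(W)` yields `σ p := (e (p, 0)).1`. It is
`<_BK`-preserving: if `e (p, 0)` and `e (q, 0)` had the same first entry `w` for some
`p <_BK q`, the whole block `(p, 0) < (p, 1) < ⋯ < (p)` would be squeezed into the block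
of `w`, which has order type `ω + 1`; there `(p)` would have to be the top `(w)`, yet
`e (q, 0)` lies above it in the same block. Conversely, `(p, n) ↦ (σ p, n)` is strictly
monotone, hence an order embedding of the well-orders.
-/

theorem BKltBy.irrefl_s4 {α : Type*} {lt : α → α → Prop} (hlt : ∀ a, ¬ lt a a) :
    ∀ s : List α, ¬ BKltBy lt s s
  | [] => id
  | a :: s => by
      rintro (h | ⟨-, h⟩)
      exacts [hlt a h, BKltBy.irrefl_s4 hlt s h]

theorem BKltBy.asymm {α : Type*} {lt : α → α → Prop} (hlt : ∀ a b, lt a b → ¬ lt b a) :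
    ∀ s t : List α, BKltBy lt s t → ¬ BKltBy lt t s
  | [], _, h, _ => h
  | _ :: _, [], _, h' => h'
  | a :: s, b :: t, h, h' => by
      rcases h with h | ⟨rfl, h⟩ <;> rcases h' with h' | ⟨h'', h'⟩
      · exact hlt a b h h'
      · exact hlt a b h (h'' ▸ h)
      · exact hlt a a h' h'
      · exact BKltBy.asymm hlt s t h h'

theorem BKlt.irrefl_s4 (s : List ℕ) : ¬ BKlt s s :=
  BKltBy.irrefl_s4 lt_irrefl s

theorem BKlt.asymm {s t : List ℕ} (h : BKlt s t) : ¬ BKlt t s :=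
  BKltBy.asymm (fun _ _ => lt_asymm) s t h

theorem BKlt.ne_nil_of_lt {s t : List ℕ} (h : BKlt s t) : s ≠ [] := by
  rintro rfl
  exact h

theorem BKlt.lt_nil {s : List ℕ} (hs : s ≠ []) : BKlt s [] := by
  cases s
  exacts [absurd rfl hs, trivial]

theorem not_optNatLt_none (o : Option ℕ) : ¬ optNatLt none o := by
  cases o <;> exact id

theorem optNatLt.exists_eq_some {o o' : Option ℕ} (h : optNatLt o o') : ∃ k, o = some k := by
  cases o
  exacts [absurd h (not_optNatLt_none o'), ⟨_, rfl⟩]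

theorem optNatLt.eq_none_of_chain {f : ℕ → Option ℕ} (hf : ∀ n, optNatLt (f n) (f (n + 1)))
    {a : Option ℕ} (ha : ∀ n, optNatLt (f n) a) : a = none := by
  obtain _ | d := a
  · rfl
  choose g hg using fun n => (ha n).exists_eq_some
  have hmono : StrictMono g := strictMono_nat_of_lt_succ fun n => by
    simpa [hg, optNatLt] using hf n
  have hbound : g d < d := by simpa [hg, optNatLt] using ha d
  exact absurd (hmono.id_le d) hbound.not_ge

theorem Rep1lt.fst_eq_of_between {x y z : List ℕ × Option ℕ} (hxy : Rep1lt x y)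
    (hyz : Rep1lt y z) (hxz : x.1 = z.1) : y.1 = x.1 := by
  rcases hxy with hxy | ⟨hxy, -⟩
  · rcases hyz with hyz | ⟨hyz, -⟩
    · exact absurd (hxz ▸ hyz) hxy.asymm
    · exact absurd (hyz ▸ hxz ▸ hxy) (BKlt.irrefl_s4 _)
  · exact hxy.symm

theorem Rep1lt.snd_of_fst_eq {x y : List ℕ × Option ℕ} (h : Rep1lt x y) (hxy : x.1 = y.1) :
    optNatLt x.2 y.2 := by
  rcases h with h | ⟨-, h⟩
  exacts [absurd (hxy ▸ h) (BKlt.irrefl_s4 _), h]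

section Embedding

variable {P : Set (List ℕ)} (e : Rep1 P → List ℕ × Option ℕ)

theorem bklt_fst_of_rep1lt_strictMono
    (he : ∀ a b : Rep1 P, Rep1lt a.1 b.1 → Rep1lt (e a) (e b))
    {p q : List ℕ} (hp : p ∈ P) (hq : q ∈ P) (hpq : BKlt p q) :
    BKlt (e ⟨(p, some 0), hp⟩).1 (e ⟨(q, some 0), hq⟩).1 := by
  let x : Option ℕ → List ℕ × Option ℕ := fun o => e ⟨(p, o), hp⟩
  let z := e ⟨(q, some 0), hq⟩
  have below : ∀ o, Rep1lt (x o) z := fun o =>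
    he ⟨(p, o), hp⟩ ⟨(q, some 0), hq⟩ (Or.inl hpq)
  have within : ∀ o o', optNatLt o o' → Rep1lt (x o) (x o') := fun o o' h =>
    he ⟨(p, o), hp⟩ ⟨(p, o'), hp⟩ (Or.inr ⟨rfl, h⟩)
  rcases below (some 0) with h | ⟨hw, -⟩
  · exact h
  have fiber : ∀ o, (x o).1 = (x (some 0)).1
    | some 0 => rfl
    | some (n + 1) =>
      (within (some 0) (some (n + 1)) n.succ_pos).fst_eq_of_between (below _) hw
    | none => (within (some 0) none trivial).fst_eq_of_between (below _) hw
  have snd_lt : ∀ o o', optNatLt o o' → optNatLt (x o).2 (x o').2 := fun o o' h =>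
    (within o o' h).snd_of_fst_eq ((fiber o).trans (fiber o').symm)
  have top : (x none).2 = none := optNatLt.eq_none_of_chain (f := fun n => (x (some n)).2)
    (fun n => snd_lt _ _ n.lt_succ_self) (fun n => snd_lt _ _ trivial)
  have := (below none).snd_of_fst_eq ((fiber none).trans hw)
  exact absurd (top ▸ this) (not_optNatLt_none _)

theorem exists_factors_of_rep1lt_strictMono
    (he : ∀ a b : Rep1 P, Rep1lt a.1 b.1 → Rep1lt (e a) (e b)) {W : Set (List ℕ)}
    (hP : ∀ p ∈ P, p ≠ []) (hW : ∀ w ∈ W, w ≠ []) (heW : ∀ a, (e a).1 ∈ W) :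
    ∃ σ, Factors P W σ := by
  classical
  let σ : List ℕ → List ℕ := fun s => if h : s ∈ P then (e ⟨(s, some 0), h⟩).1 else []
  have hσ : ∀ {s} (hs : s ∈ P), σ s = (e ⟨(s, some 0), hs⟩).1 := fun hs => dif_pos hs
  have hσnil : σ [] = [] := dif_neg fun h => hP _ h rfl
  refine ⟨σ, hσnil, fun p hp => hσ hp ▸ Set.mem_insert_of_mem _ (heW _), ?_⟩
  rintro s (rfl | hs) t (rfl | ht) hst
  · exact absurd hst (BKlt.irrefl_s4 _)
  · exact absurd rfl hst.ne_nil_of_lt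
  · rw [hσ hs, hσnil]
    exact BKlt.lt_nil (hW _ (heW _))
  · rw [hσ hs, hσ ht]
    exact bklt_fst_of_rep1lt_strictMono e he hs ht hst

end Embedding

section Factors

variable {P W : Set (List ℕ)} {σ : List ℕ → List ℕ}

theorem Factors.mem {p : List ℕ} (hσ : Factors P W σ) (hP : ∀ p ∈ P, p ≠ [])
    (hp : p ∈ P) :
    σ p ∈ W := by
  have hlt : BKlt (σ p) (σ []) :=
    hσ.2.2 p (Set.mem_insert_of_mem _ hp) [] (Set.mem_insert _ _) (BKlt.lt_nil (hP p hp))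
  rw [hσ.1] at hlt
  exact (hσ.2.1 p hp).resolve_left hlt.ne_nil_of_lt

theorem Factors.rep1lt_map {x y : List ℕ × Option ℕ} (hσ : Factors P W σ) (hx : x ∈ Rep1 P)
    (hy : y ∈ Rep1 P) (h : Rep1lt x y) : Rep1lt (σ x.1, x.2) (σ y.1, y.2) := by
  rcases h with h | ⟨h, h'⟩
  · exact Or.inl (hσ.2.2 _ (Set.mem_insert_of_mem _ hx) _ (Set.mem_insert_of_mem _ hy) h)
  · exact Or.inr ⟨congrArg σ h, h'⟩

end Factors

theorem stmt4_general (P W : Set (List ℕ)) (hP : IsLevel1Tree P) (hW : IsLevel1Tree W)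
    (h1 : IsWellOrder {x // x ∈ Rep1 P} (fun a b => Rep1lt a.1 b.1))
    (h2 : IsWellOrder {x // x ∈ Rep1 W} (fun a b => Rep1lt a.1 b.1)) :
    @Ordinal.type {x // x ∈ Rep1 P} (fun a b => Rep1lt a.1 b.1) h1 ≤
      @Ordinal.type {x // x ∈ Rep1 W} (fun a b => Rep1lt a.1 b.1) h2 ↔
    ∃ σ : List ℕ → List ℕ, Factors P W σ := by
  constructor
  · intro hle
    obtain ⟨e⟩ := Ordinal.type_le_iff'.mp hle
    exact exists_factors_of_rep1lt_strictMono (fun a => (e a).1)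
      (fun a b h => e.map_rel_iff.mpr h) hP.1 hW.1 fun a => (e a).2
  · rintro ⟨σ, hσ⟩
    let f : Rep1 P → Rep1 W := fun x => ⟨(σ x.1.1, x.1.2), hσ.mem hP.1 x.2⟩
    exact (RelEmbedding.ofMonotone f fun a b => hσ.rep1lt_map a.2 b.2).ordinal_type_le

/-- For Π¹₁-wellfounded level-1 trees `P`, `W`, the order type of
`(rep(P), <^P)` is at most that of `(rep(W), <^W)` iff some `σ` factors `(P, W)`. -/
theorem stmt4 (P W : Set (List ℕ)) (hP : IsLevel1Tree P) (hW : IsLevel1Tree W)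
    (hPwf : Pi11WF P) (hWwf : Pi11WF W)
    (h1 : IsWellOrder {x // x ∈ Rep1 P} (fun a b => Rep1lt a.1 b.1))
    (h2 : IsWellOrder {x // x ∈ Rep1 W} (fun a b => Rep1lt a.1 b.1)) :
    @Ordinal.type {x // x ∈ Rep1 P} (fun a b => Rep1lt a.1 b.1) h1 ≤
      @Ordinal.type {x // x ∈ Rep1 W} (fun a b => Rep1lt a.1 b.1) h2 ↔
    ∃ σ : List ℕ → List ℕ, Factors P W σ :=
  stmt4_general P W hP hW h1 h2
end
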